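/- Let C > 0 and let V : ℝ → ℝ be twice continuously differentiable with V(ξ) < C for all ξ, satisfying the solitary-wave profile equation C V''(ξ) = C V(ξ) − V(ξ)/(C − V(ξ)) − (1/2) V(ξ)² for all ξ, and suppose V(ξ) → 0 and V'(ξ) → 0 as ξ → −∞. Then for every ξ ∈ ℝ: (C/2) ((V'(ξ))² − V(ξ)²) + (1/6) V(ξ)³ − V(ξ) − C · log(1 − V(ξ)/C) = 0. -/

import Mathlib

open Filter Topology

/-!
The profile equation is Newton's equation `C V'' = P'(V)` for the potential
`P = profilePotential C`, so the energy `(C/2) V'² - P(V)` is constant in `ξ`. This energy is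
exactly the left-hand side of the identity, and its limit at `-∞` is `-P(0) = 0`.
-/

noncomputable def profilePotential (C v : ℝ) : ℝ :=
  C / 2 * v ^ 2 - v ^ 3 / 6 + v + C * Real.log (1 - v / C)

theorem hasDerivAt_profilePotential {C v : ℝ} (hC : C ≠ 0) (hv : v ≠ C) :
    HasDerivAt (profilePotential C) (C * v - v / (C - v) - 1 / 2 * v ^ 2) v := by
  have hCv : C - v ≠ 0 := sub_ne_zero.mpr hv.symm
  have hlog_arg : 1 - v / C ≠ 0 := by
    rwa [one_sub_div hC, div_ne_zero_iff, and_iff_left hC]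
  have hlog : HasDerivAt (fun w => Real.log (1 - w / C)) (-(1 / C) / (1 - v / C)) v := by
    simpa using ((hasDerivAt_id v).div_const C).const_sub 1 |>.log hlog_arg
  refine (((((hasDerivAt_pow 2 v).const_mul (C / 2)).sub
    ((hasDerivAt_pow 3 v).div_const 6)).add (hasDerivAt_id v)).add
      (hlog.const_mul C)).congr_deriv ?_
  field_simp
  ring

theorem hasDerivAt_energy_of_newton {m p t : ℝ} {P x : ℝ → ℝ}
    (hx : DifferentiableAt ℝ x t) (hx' : DifferentiableAt ℝ (deriv x) t)
    (hP : HasDerivAt P p (x t)) (hnewton : m * deriv (deriv x) t = p) :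
    HasDerivAt (fun s => m / 2 * deriv x s ^ 2 - P (x s)) 0 t := by
  refine (((hx'.hasDerivAt.pow 2).const_mul (m / 2)).sub
    (hP.comp t hx.hasDerivAt)).congr_deriv ?_
  rw [← hnewton]
  ring

theorem eq_of_hasDerivAt_zero_of_tendsto_atBot {f : ℝ → ℝ} {a : ℝ}
    (hf : ∀ t, HasDerivAt f 0 t) (hlim : Tendsto f atBot (𝓝 a)) (t : ℝ) : f t = a := by
  have hconst : f = fun _ => f t := funext fun s =>
    is_const_of_deriv_eq_zero (fun u => (hf u).differentiableAt) (fun u => (hf u).deriv) s t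
  rw [hconst] at hlim
  exact tendsto_nhds_unique tendsto_const_nhds hlim

/-- First integral of the solitary-wave profile equation of the
Amick–Schonbek system: if `C V'' = C V - V/(C - V) - (1/2) V²` with
`V, V' → 0` at `-∞` and `V < C`, then
`(C/2)((V')² - V²) + (1/6) V³ - V - C log(1 - V/C) = 0` identically. -/
theorem amick_schonbek_first_integral
    (C : ℝ) (hC : 0 < C) (V : ℝ → ℝ) (hV : ContDiff ℝ 2 V)
    (hlt : ∀ ξ : ℝ, V ξ < C)
    (ode : ∀ ξ : ℝ,
      C * deriv (deriv V) ξ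
        = C * V ξ - V ξ / (C - V ξ) - (1 / 2) * (V ξ) ^ 2)
    (hV0 : Tendsto V atBot (nhds 0))
    (hV'0 : Tendsto (deriv V) atBot (nhds 0)) :
    ∀ ξ : ℝ,
      (C / 2) * ((deriv V ξ) ^ 2 - (V ξ) ^ 2) + (1 / 6) * (V ξ) ^ 3
        - V ξ - C * Real.log (1 - V ξ / C) = 0 := by
  have henergy : ∀ ξ, HasDerivAt
      (fun s => C / 2 * deriv V s ^ 2 - profilePotential C (V s)) 0 ξ := fun ξ =>
    hasDerivAt_energy_of_newton (hV.differentiable two_ne_zero ξ)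
      (hV.differentiable_deriv_two ξ) (hasDerivAt_profilePotential hC.ne' (hlt ξ).ne) (ode ξ)
  have hP0 : Tendsto (fun s => profilePotential C (V s)) atBot (𝓝 (profilePotential C 0)) :=
    (hasDerivAt_profilePotential hC.ne' hC.ne).continuousAt.tendsto.comp hV0
  have hlim : Tendsto (fun s => C / 2 * deriv V s ^ 2 - profilePotential C (V s)) atBot (𝓝 0) := by
    simpa [profilePotential] using ((hV'0.pow 2).const_mul (C / 2)).sub hP0
  intro ξ
  have h := eq_of_hasDerivAt_zero_of_tendsto_atBot henergy hlim ξ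
  simp only [profilePotential] at h
  linear_combination h
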